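/- Let 0 < s < 1, a < b, ε > 0, let X : [a,b] → ℝ be continuous and let ψ ∈ BV_loc(ℝ) with total variation gradient measure ‖Dψ‖. If X is (s,1)-variable with respect to ψ, i.e. ∫_a^b U^{1-s}‖Dψ‖(X(t)) dt < ∞ where U^{1-s}ν(x) = ∫_ℝ |x-z|^{-s} ν(dz), then ∫_a^b ∫_a^b |r-θ|^{ε-1} ∫_0^1 U^{1-s}‖Dψ‖(t X(r) + (1-t) X(θ)) · t^s dt dθ dr < ∞. -/

import Mathlib

open Set MeasureTheory ENNReal


private lemma rpow_neg_anti {x y : ℝ≥0∞} (h : x ≤ y) {s : ℝ} (hs : 0 ≤ s) :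
    y ^ (-s) ≤ x ^ (-s) := by
  rw [ENNReal.rpow_neg, ENNReal.rpow_neg]
  exact ENNReal.inv_le_inv.2 (ENNReal.rpow_le_rpow h hs)

private lemma lemK {σ : ℝ} (h0 : 0 < σ) (h1 : σ < 1) {D : ℝ} (hD : 0 ≤ D) :
    ∫⁻ u in Ioc (0:ℝ) D, (ENNReal.ofReal u) ^ (-σ) ≤ ENNReal.ofReal (D ^ (1-σ) / (1-σ)) := by
  have hcongr : ∫⁻ u in Ioc (0:ℝ) D, (ENNReal.ofReal u) ^ (-σ)
      = ∫⁻ u in Ioc (0:ℝ) D, ENNReal.ofReal (u ^ (-σ)) := by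
    refine setLIntegral_congr_fun measurableSet_Ioc (fun u hu => ?_)
    rw [ENNReal.ofReal_rpow_of_pos hu.1]
  have hint : IntegrableOn (fun u : ℝ => u ^ (-σ)) (Ioc 0 D) volume := by
    have := intervalIntegral.intervalIntegrable_rpow' (a := 0) (b := D) (r := -σ)
      (by linarith)
    rw [intervalIntegrable_iff, uIoc_of_le hD] at this
    exact this
  have hnn : 0 ≤ᵐ[volume.restrict (Ioc (0:ℝ) D)] fun u : ℝ => u ^ (-σ) := by
    filter_upwards [ae_restrict_mem measurableSet_Ioc] with u hu
    exact Real.rpow_nonneg hu.1.le _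
  rw [hcongr, ← ofReal_integral_eq_lintegral_ofReal hint hnn]
  apply ENNReal.ofReal_le_ofReal
  have h2 : ∫ u in Ioc (0:ℝ) D, u ^ (-σ) = ∫ u in (0:ℝ)..D, u ^ (-σ) := by
    rw [intervalIntegral.integral_of_le hD]
  rw [h2, integral_rpow (Or.inl (by linarith)), Real.zero_rpow (by linarith)]
  have h3 : -σ + 1 = 1 - σ := by ring
  rw [h3]
  simp

private lemma lemA {σ : ℝ} (h0 : 0 < σ) (h1 : σ < 1) {a b r : ℝ} (hab : a ≤ b)
    (hr : r ∈ Icc a b) :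
    ∫⁻ t in Icc a b, (ENNReal.ofReal |t - r|) ^ (-σ)
      ≤ ENNReal.ofReal (2 * ((b-a) ^ (1-σ) / (1-σ))) := by
  obtain ⟨hr1, hr2⟩ := hr
  have hsub : Icc a b ⊆ Icc a r ∪ Ioc r b := by
    intro t ht
    rcases le_or_gt t r with h | h
    · exact Or.inl ⟨ht.1, h⟩
    · exact Or.inr ⟨h, ht.2⟩
  have hdisj : Disjoint (Icc a r) (Ioc r b) := by
    rw [Set.disjoint_left]
    intro t ht ht'
    exact absurd ht.2 (not_le.2 ht'.1)
  have hmono1 : ((r-a) ^ (1-σ) / (1-σ)) ≤ ((b-a) ^ (1-σ) / (1-σ)) :=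
    div_le_div_of_nonneg_right
      (Real.rpow_le_rpow (by linarith) (by linarith) (by linarith)) (by linarith)
  have hmono2 : ((b-r) ^ (1-σ) / (1-σ)) ≤ ((b-a) ^ (1-σ) / (1-σ)) :=
    div_le_div_of_nonneg_right
      (Real.rpow_le_rpow (by linarith) (by linarith) (by linarith)) (by linarith)
  calc ∫⁻ t in Icc a b, (ENNReal.ofReal |t - r|) ^ (-σ)
      ≤ ∫⁻ t in Icc a r ∪ Ioc r b, (ENNReal.ofReal |t - r|) ^ (-σ) :=
        lintegral_mono_set hsub
    _ = (∫⁻ t in Icc a r, (ENNReal.ofReal |t - r|) ^ (-σ))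
        + ∫⁻ t in Ioc r b, (ENNReal.ofReal |t - r|) ^ (-σ) :=
        lintegral_union measurableSet_Ioc hdisj
    _ ≤ ENNReal.ofReal ((b-a) ^ (1-σ) / (1-σ)) + ENNReal.ofReal ((b-a) ^ (1-σ) / (1-σ)) := by
        gcongr
        · -- left piece
          have h1' : ∫⁻ t in Icc a r, (ENNReal.ofReal |t - r|) ^ (-σ)
              = ∫⁻ t in Icc a r, (fun u => (ENNReal.ofReal u) ^ (-σ)) (r - t) := by
            refine setLIntegral_congr_fun measurableSet_Icc (fun t ht => ?_)
            rw [abs_sub_comm, abs_of_nonneg (by linarith [ht.2])]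
          rw [h1']
          have hpre : (fun t : ℝ => r - t) ⁻¹' (Icc 0 (r - a)) = Icc a r := by
            ext t; simp only [mem_preimage, mem_Icc]
            constructor
            · rintro ⟨u, v⟩; constructor <;> linarith
            · rintro ⟨u, v⟩; constructor <;> linarith
          have hmp := (Measure.measurePreserving_sub_left (volume : Measure ℝ)
              r).setLIntegral_comp_preimage_emb
            (MeasurableEquiv.subLeft r).measurableEmbedding
            (fun u => (ENNReal.ofReal u) ^ (-σ)) (Icc 0 (r - a))
          have heq : ∫⁻ t in Icc a r, (fun u => (ENNReal.ofReal u) ^ (-σ)) (r - t)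
              = ∫⁻ u in Icc (0:ℝ) (r - a), (ENNReal.ofReal u) ^ (-σ) := by
            rw [← hpre]; exact hmp
          rw [heq, Measure.restrict_congr_set Ioc_ae_eq_Icc.symm]
          exact (lemK h0 h1 (by linarith)).trans (ENNReal.ofReal_le_ofReal hmono1)
        · -- right piece
          have h2' : ∫⁻ t in Ioc r b, (ENNReal.ofReal |t - r|) ^ (-σ)
              = ∫⁻ t in Ioc r b, (fun u => (ENNReal.ofReal u) ^ (-σ)) (t - r) := by
            refine setLIntegral_congr_fun measurableSet_Ioc (fun t ht => ?_)
            rw [abs_of_pos (by linarith [ht.1])]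
          rw [h2']
          have hpre : (fun t : ℝ => t - r) ⁻¹' (Ioc 0 (b - r)) = Ioc r b := by
            ext t; simp only [mem_preimage, mem_Ioc]
            constructor
            · rintro ⟨u, v⟩; constructor <;> linarith
            · rintro ⟨u, v⟩; constructor <;> linarith
          have hmp := (measurePreserving_sub_right (volume : Measure ℝ)
              r).setLIntegral_comp_preimage_emb
            (MeasurableEquiv.subRight r).measurableEmbedding
            (fun u => (ENNReal.ofReal u) ^ (-σ)) (Ioc 0 (b - r))
          have heq : ∫⁻ t in Ioc r b, (fun u => (ENNReal.ofReal u) ^ (-σ)) (t - r)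
              = ∫⁻ u in Ioc (0:ℝ) (b - r), (ENNReal.ofReal u) ^ (-σ) := by
            rw [← hpre]; exact hmp
          rw [heq]
          exact (lemK h0 h1 (by linarith)).trans (ENNReal.ofReal_le_ofReal hmono2)
    _ = ENNReal.ofReal (2 * ((b-a) ^ (1-σ) / (1-σ))) := by
        have hnn : 0 ≤ (b-a) ^ (1-σ) / (1-σ) :=
          div_nonneg (Real.rpow_nonneg (by linarith) _) (by linarith)
        rw [← ENNReal.ofReal_add hnn hnn]
        ring_nf

private lemma segAB {s : ℝ} (hs0 : 0 < s) (hs1 : s < 1) (α β : ℝ) :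
    ∫⁻ t in Icc (0:ℝ) 1, (ENNReal.ofReal |α + t*β|) ^ (-s) * ENNReal.ofReal (t ^ s)
      ≤ ENNReal.ofReal (2 / (1-s)) * (ENNReal.ofReal |α + β|) ^ (-s) := by
  have hC1 : (1:ℝ≥0∞) ≤ ENNReal.ofReal (2 / (1-s)) := by
    rw [← ENNReal.ofReal_one]
    apply ENNReal.ofReal_le_ofReal
    rw [le_div_iff₀ (by linarith)]; linarith
  rcases eq_or_ne (α + β) 0 with h0 | h0
  · have htop : (ENNReal.ofReal |α + β|) ^ (-s) = ⊤ := by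
      rw [h0]
      simp only [abs_zero, ENNReal.ofReal_zero]
      exact ENNReal.zero_rpow_of_neg (by linarith)
    rw [htop, ENNReal.mul_top (ne_of_gt (ENNReal.ofReal_pos.2 (div_pos two_pos (by linarith))))]
    exact le_top
  rcases le_or_gt 0 (α * (α + β)) with hsign | hsign
  · -- same-sign case
    have hpt : ∀ t ∈ Icc (0:ℝ) 1,
        (ENNReal.ofReal |α + t*β|) ^ (-s) * ENNReal.ofReal (t ^ s)
          ≤ (ENNReal.ofReal |α + β|) ^ (-s) := by
      intro t ht
      rcases eq_or_lt_of_le ht.1 with h | h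
      · rw [← h, Real.zero_rpow hs0.ne']
        simp
      · have ht1 : t ≤ 1 := ht.2
        have habs : t * |α + β| ≤ |α + t*β| := by
          rcases h0.lt_or_gt with hn | hp
          · have hα : α ≤ 0 := by nlinarith
            have h3 : α + t*β < 0 := by nlinarith
            rw [abs_of_neg h3, abs_of_neg hn]; nlinarith
          · have hα : 0 ≤ α := by nlinarith
            have h3 : 0 < α + t*β := by nlinarith
            rw [abs_of_pos h3, abs_of_pos hp]; nlinarith
        calc (ENNReal.ofReal |α + t*β|) ^ (-s) * ENNReal.ofReal (t ^ s)
            ≤ (ENNReal.ofReal (t * |α + β|)) ^ (-s) * ENNReal.ofReal (t ^ s) :=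
              mul_le_mul_left (rpow_neg_anti (ENNReal.ofReal_le_ofReal habs) hs0.le) _
          _ = (ENNReal.ofReal (t ^ (-s)) * (ENNReal.ofReal |α + β|) ^ (-s))
                * ENNReal.ofReal (t ^ s) := by
              rw [ENNReal.ofReal_mul h.le,
                ENNReal.mul_rpow_of_ne_top ofReal_ne_top ofReal_ne_top,
                ENNReal.ofReal_rpow_of_pos h]
          _ = (ENNReal.ofReal |α + β|) ^ (-s)
                * (ENNReal.ofReal (t ^ (-s)) * ENNReal.ofReal (t ^ s)) := by ring
          _ = (ENNReal.ofReal |α + β|) ^ (-s) := by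
              rw [← ENNReal.ofReal_mul (Real.rpow_nonneg h.le _), ← Real.rpow_add h]
              norm_num
    calc ∫⁻ t in Icc (0:ℝ) 1, (ENNReal.ofReal |α + t*β|) ^ (-s) * ENNReal.ofReal (t ^ s)
        ≤ ∫⁻ _t in Icc (0:ℝ) 1, (ENNReal.ofReal |α + β|) ^ (-s) := by
          apply lintegral_mono_ae
          filter_upwards [ae_restrict_mem measurableSet_Icc] with t ht using hpt t ht
      _ = (ENNReal.ofReal |α + β|) ^ (-s) * volume (Icc (0:ℝ) 1) := setLIntegral_const _ _
      _ = (ENNReal.ofReal |α + β|) ^ (-s) := by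
          rw [Real.volume_Icc]; norm_num
      _ ≤ ENNReal.ofReal (2 / (1-s)) * (ENNReal.ofReal |α + β|) ^ (-s) := by
          nth_rewrite 1 [← one_mul ((ENNReal.ofReal |α + β|) ^ (-s))]
          exact mul_le_mul_left hC1 _
  · -- opposite-sign case
    have hβ : β ≠ 0 := by
      intro h; rw [h] at hsign; nlinarith [sq_nonneg α]
    set t0 := -α/β with ht0def
    have hα : α = -t0*β := by rw [ht0def]; field_simp
    have hb2 : 0 < β^2 := by positivity
    have hprodeq : α * (α + β) = -(t0*(1-t0))*β^2 := by rw [hα]; ring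
    have hprod : 0 < t0*(1-t0) := by nlinarith
    have ht0a : 0 < t0 := by
      by_contra hc; push_neg at hc
      nlinarith [mul_nonneg (neg_nonneg.2 hc) (by linarith : (0:ℝ) ≤ 1 - t0)]
    have ht0b : t0 < 1 := by
      by_contra hc; push_neg at hc
      nlinarith [mul_nonneg (by linarith : (0:ℝ) ≤ t0) (by linarith : (0:ℝ) ≤ t0 - 1)]
    have habs : ∀ t : ℝ, |α + t*β| = |β| * |t - t0| := by
      intro t
      rw [hα, show -t0*β + t*β = β*(t-t0) by ring, abs_mul]
    have hle : |α + β| ≤ |β| := by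
      rw [show α + β = β * (1 - t0) by rw [hα]; ring, abs_mul]
      calc |β| * |1 - t0| ≤ |β| * 1 := by
            apply mul_le_mul_of_nonneg_left ?_ (abs_nonneg β)
            rw [abs_of_pos (by linarith)]; linarith
        _ = |β| := mul_one _
    have hpt : ∀ t ∈ Icc (0:ℝ) 1,
        (ENNReal.ofReal |α + t*β|) ^ (-s) * ENNReal.ofReal (t ^ s)
          ≤ (ENNReal.ofReal |β|) ^ (-s) * (ENNReal.ofReal |t - t0|) ^ (-s) := by
      intro t ht
      rw [habs t, ENNReal.ofReal_mul (abs_nonneg β),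
        ENNReal.mul_rpow_of_ne_top ofReal_ne_top ofReal_ne_top]
      have h1 : ENNReal.ofReal (t ^ s) ≤ 1 := by
        rw [← ENNReal.ofReal_one]
        exact ENNReal.ofReal_le_ofReal (Real.rpow_le_one ht.1 ht.2 hs0.le)
      calc _ ≤ ((ENNReal.ofReal |β|) ^ (-s) * (ENNReal.ofReal |t - t0|) ^ (-s)) * 1 :=
            mul_le_mul_right h1 _
        _ = _ := mul_one _
    have hwm : Measurable fun t : ℝ => (ENNReal.ofReal |t - t0|) ^ (-s) :=
      ENNReal.continuous_rpow_const.measurable.comp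
        (ENNReal.measurable_ofReal.comp
          ((continuous_abs.comp (continuous_id.sub continuous_const)).measurable))
    calc ∫⁻ t in Icc (0:ℝ) 1, (ENNReal.ofReal |α + t*β|) ^ (-s) * ENNReal.ofReal (t ^ s)
        ≤ ∫⁻ t in Icc (0:ℝ) 1,
            (ENNReal.ofReal |β|) ^ (-s) * (ENNReal.ofReal |t - t0|) ^ (-s) := by
          apply lintegral_mono_ae
          filter_upwards [ae_restrict_mem measurableSet_Icc] with t ht using hpt t ht
      _ = (ENNReal.ofReal |β|) ^ (-s)
            * ∫⁻ t in Icc (0:ℝ) 1, (ENNReal.ofReal |t - t0|) ^ (-s) :=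
          lintegral_const_mul _ hwm
      _ ≤ (ENNReal.ofReal |β|) ^ (-s) * ENNReal.ofReal (2 * ((1-0) ^ (1-s) / (1-s))) :=
          mul_le_mul_right (lemA hs0 hs1 (by norm_num) ⟨ht0a.le, ht0b.le⟩) _
      _ = ENNReal.ofReal (2 / (1-s)) * (ENNReal.ofReal |β|) ^ (-s) := by
          rw [mul_comm]
          norm_num [Real.one_rpow, div_eq_mul_inv]
      _ ≤ ENNReal.ofReal (2 / (1-s)) * (ENNReal.ofReal |α + β|) ^ (-s) :=
          mul_le_mul_right (rpow_neg_anti (ENNReal.ofReal_le_ofReal hle) hs0.le) _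

/-- If `X : [a,b] → ℝ` is continuous and `(s,1)`-variable with respect to a
locally finite nonnegative measure `ν` (playing the role of the total variation
measure `‖Dψ‖` of `ψ ∈ BV_loc(ℝ)`), i.e. `∫_a^b U^{1-s}ν(X(t)) dt < ∞`, then the
weighted variability integral along line segments is finite:
`∫_a^b ∫_a^b |r-θ|^{ε-1} ∫_0^1 U^{1-s}ν(tX(r)+(1-t)X(θ)) t^s dt dθ dr < ∞`. -/
theorem stmt13 (a b s ε : ℝ) (hab : a < b) (hs0 : 0 < s) (hs1 : s < 1) (hε : 0 < ε)
    (X : ℝ → ℝ) (hX : ContinuousOn X (Icc a b))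
    (ν : Measure ℝ) [IsLocallyFiniteMeasure ν]
    (hvar : (∫⁻ t in Icc a b, ∫⁻ z, (ENNReal.ofReal |X t - z|) ^ (-s) ∂ν) < ⊤) :
    (∫⁻ r in Icc a b, ∫⁻ θ in Icc a b,
        (ENNReal.ofReal |r - θ|) ^ (ε - 1) *
          ∫⁻ t in Icc (0:ℝ) 1,
            (∫⁻ z, (ENNReal.ofReal |t * X r + (1 - t) * X θ - z|) ^ (-s) ∂ν) *
              ENNReal.ofReal (t ^ s)) < ⊤ := by
  have hC_ne : (ENNReal.ofReal (2/(1-s))) ≠ ⊤ := ofReal_ne_top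
  set C := ENNReal.ofReal (2/(1-s)) with hC
  set F : ℝ → ℝ≥0∞ := fun r => ∫⁻ z, (ENNReal.ofReal |X r - z|) ^ (-s) ∂ν with hF
  have inner : ∀ r θ : ℝ, (∫⁻ t in Icc (0:ℝ) 1,
      (∫⁻ z, (ENNReal.ofReal |t * X r + (1 - t) * X θ - z|) ^ (-s) ∂ν)
        * ENNReal.ofReal (t ^ s)) ≤ C * F r := by
    intro r θ
    have hmeas : Measurable (Function.uncurry fun (t z : ℝ) =>
        (ENNReal.ofReal |t * X r + (1 - t) * X θ - z|) ^ (-s) * ENNReal.ofReal (t ^ s)) := by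
      apply Measurable.mul
      · apply ENNReal.continuous_rpow_const.measurable.comp
        apply ENNReal.measurable_ofReal.comp
        exact (continuous_abs.comp (by fun_prop)).measurable
      · exact ENNReal.measurable_ofReal.comp
          (((Real.continuous_rpow_const hs0.le).comp continuous_fst).measurable)
    calc ∫⁻ t in Icc (0:ℝ) 1,
          (∫⁻ z, (ENNReal.ofReal |t * X r + (1 - t) * X θ - z|) ^ (-s) ∂ν)
            * ENNReal.ofReal (t ^ s)
        = ∫⁻ t in Icc (0:ℝ) 1, ∫⁻ z,
            (ENNReal.ofReal |t * X r + (1 - t) * X θ - z|) ^ (-s)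
              * ENNReal.ofReal (t ^ s) ∂ν := by
          refine lintegral_congr fun t => (lintegral_mul_const' _ _ ofReal_ne_top).symm
      _ = ∫⁻ z, (∫⁻ t in Icc (0:ℝ) 1,
            (ENNReal.ofReal |t * X r + (1 - t) * X θ - z|) ^ (-s)
              * ENNReal.ofReal (t ^ s)) ∂ν :=
          lintegral_lintegral_swap hmeas.aemeasurable
      _ ≤ ∫⁻ z, C * (ENNReal.ofReal |X r - z|) ^ (-s) ∂ν := by
          refine lintegral_mono fun z => ?_
          have hseg := segAB hs0 hs1 (X θ - z) (X r - X θ)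
          have harg : ∀ t : ℝ, X θ - z + t*(X r - X θ) = t * X r + (1 - t) * X θ - z :=
            fun t => by ring
          have harg2 : X θ - z + (X r - X θ) = X r - z := by ring
          rw [harg2] at hseg
          simp_rw [harg] at hseg
          exact hseg
      _ = C * F r := lintegral_const_mul' _ _ hC_ne
  obtain ⟨M, hM_ne, hM⟩ : ∃ M : ℝ≥0∞, M ≠ ⊤ ∧ ∀ r ∈ Icc a b,
      (∫⁻ θ in Icc a b, (ENNReal.ofReal |r - θ|) ^ (ε-1)) ≤ M := by
    rcases lt_or_ge ε 1 with hε1 | hε1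
    · refine ⟨ENNReal.ofReal (2 * ((b-a) ^ (1-(1-ε)) / (1-(1-ε)))), ofReal_ne_top,
        fun r hr => ?_⟩
      have hrw : ∀ θ : ℝ, (ENNReal.ofReal |r - θ|) ^ (ε-1)
          = (ENNReal.ofReal |θ - r|) ^ (-(1-ε)) := by
        intro θ
        rw [abs_sub_comm]
        congr 1
        ring
      simp_rw [hrw]
      exact lemA (by linarith) (by linarith) hab.le hr
    · refine ⟨(ENNReal.ofReal (b-a)) ^ (ε-1) * ENNReal.ofReal (b-a),
        ENNReal.mul_ne_top (ENNReal.rpow_ne_top_of_nonneg (by linarith) ofReal_ne_top)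
          ofReal_ne_top, fun r hr => ?_⟩
      calc ∫⁻ θ in Icc a b, (ENNReal.ofReal |r - θ|) ^ (ε-1)
          ≤ ∫⁻ _θ in Icc a b, (ENNReal.ofReal (b-a)) ^ (ε-1) := by
            apply lintegral_mono_ae
            filter_upwards [ae_restrict_mem measurableSet_Icc] with θ hθ
            apply ENNReal.rpow_le_rpow (ENNReal.ofReal_le_ofReal ?_) (by linarith)
            rw [abs_sub_le_iff]
            constructor <;> linarith [hr.1, hr.2, hθ.1, hθ.2]
        _ = (ENNReal.ofReal (b-a)) ^ (ε-1) * volume (Icc a b) := setLIntegral_const _ _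
        _ = (ENNReal.ofReal (b-a)) ^ (ε-1) * ENNReal.ofReal (b-a) := by
            rw [Real.volume_Icc]
  have step : ∀ r ∈ Icc a b,
      (∫⁻ θ in Icc a b, (ENNReal.ofReal |r - θ|) ^ (ε - 1) *
        ∫⁻ t in Icc (0:ℝ) 1,
          (∫⁻ z, (ENNReal.ofReal |t * X r + (1 - t) * X θ - z|) ^ (-s) ∂ν) *
            ENNReal.ofReal (t ^ s)) ≤ C * M * F r := by
    intro r hr
    have hwmeas : Measurable fun θ : ℝ => (ENNReal.ofReal |r - θ|) ^ (ε-1) :=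
      ENNReal.continuous_rpow_const.measurable.comp
        (ENNReal.measurable_ofReal.comp
          ((continuous_abs.comp (continuous_const.sub continuous_id)).measurable))
    calc (∫⁻ θ in Icc a b, (ENNReal.ofReal |r - θ|) ^ (ε - 1) *
          ∫⁻ t in Icc (0:ℝ) 1,
            (∫⁻ z, (ENNReal.ofReal |t * X r + (1 - t) * X θ - z|) ^ (-s) ∂ν) *
              ENNReal.ofReal (t ^ s))
        ≤ ∫⁻ θ in Icc a b, (C * F r) * (ENNReal.ofReal |r - θ|) ^ (ε - 1) := by
          refine lintegral_mono fun θ => ?_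
          rw [mul_comm ((C * F r)) _]
          exact mul_le_mul_right (inner r θ) _
      _ = (C * F r) * ∫⁻ θ in Icc a b, (ENNReal.ofReal |r - θ|) ^ (ε - 1) :=
          lintegral_const_mul _ hwmeas
      _ ≤ (C * F r) * M := mul_le_mul_right (hM r hr) _
      _ = C * M * F r := by ring
  calc (∫⁻ r in Icc a b, ∫⁻ θ in Icc a b,
        (ENNReal.ofReal |r - θ|) ^ (ε - 1) *
          ∫⁻ t in Icc (0:ℝ) 1,
            (∫⁻ z, (ENNReal.ofReal |t * X r + (1 - t) * X θ - z|) ^ (-s) ∂ν) *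
              ENNReal.ofReal (t ^ s))
      ≤ ∫⁻ r in Icc a b, C * M * F r := by
        apply lintegral_mono_ae
        filter_upwards [ae_restrict_mem measurableSet_Icc] with r hr using step r hr
    _ = (C * M) * ∫⁻ r in Icc a b, F r :=
        lintegral_const_mul' _ _ (ENNReal.mul_ne_top hC_ne hM_ne)
    _ < ⊤ := ENNReal.mul_lt_top (ENNReal.mul_ne_top hC_ne hM_ne).lt_top hvar
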